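/- If C' is a dominating set of the hypercube F_2^n, then C = F_2^2 ⊕ C' = {(a,b,c) : a,b ∈ {0,1}, c ∈ C'} is a local identifying code in F_2^{n+2}. Consequently the minimum size of a local identifying code in F_2^{n+2} is at most 4 times the minimum size of a dominating set in F_2^n. -/

import Mathlib

/-!
The hypercube is bipartite, hence triangle-free, so adjacent vertices `u, v` satisfy
`N[u] ∩ N[v] = {u, v}`. If a dominating code has `I(u) = I(v)`, then `I(u) ⊆ {u, v}` contains a
codeword `w ∈ {u, v}` with `I(w) = I(u)`. But every codeword of `F_2^2 ⊕ C'` has two more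
codewords among its neighbours (flip one of the first two coordinates), and they cannot both fit
into `{u, v} \ {w}`. Domination lifts from `C'` one coordinate at a time, and
`|F_2^2 ⊕ C'| = 4 |C'|`.
-/

open SimpleGraph

/-- The closed neighbourhood of a vertex. -/
def cnbr {V : Type*} (G : SimpleGraph V) (u : V) : Set V := insert u (G.neighborSet u)

/-- The `I`-set of a vertex with respect to a code `C`. -/
def iset {V : Type*} (G : SimpleGraph V) (C : Set V) (u : V) : Set V := cnbr G u ∩ C

/-- `C` is a dominating set (covering code). -/
def IsDominating {V : Type*} (G : SimpleGraph V) (C : Set V) : Prop :=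
  ∀ u, (iset G C u).Nonempty

/-- `C` is a local identifying code. -/
def IsLocalID {V : Type*} (G : SimpleGraph V) (C : Set V) : Prop :=
  IsDominating G C ∧ ∀ u v, G.Adj u v → iset G C u ≠ iset G C v

/-- `C` is a local locating-dominating code. -/
def IsLocalLD {V : Type*} (G : SimpleGraph V) (C : Set V) : Prop :=
  IsDominating G C ∧ ∀ u v, G.Adj u v → u ∉ C → v ∉ C → iset G C u ≠ iset G C v

/-- `C` is an identifying code. -/
def IsID {V : Type*} (G : SimpleGraph V) (C : Set V) : Prop :=
  IsDominating G C ∧ ∀ u v : V, u ≠ v → iset G C u ≠ iset G C v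

/-- `C` is a locating-dominating code. -/
def IsLD {V : Type*} (G : SimpleGraph V) (C : Set V) : Prop :=
  IsDominating G C ∧ ∀ u v : V, u ≠ v → u ∉ C → v ∉ C → iset G C u ≠ iset G C v

/-- The share of a codeword `c`. -/
noncomputable def share {V : Type*} (G : SimpleGraph V) (C : Set V) (c : V) : ℝ :=
  ∑ᶠ u ∈ cnbr G c, (1 : ℝ) / (iset G C u).ncard

/-- The binary `n`-dimensional hypercube. -/
def cube (n : ℕ) : SimpleGraph (Fin n → ZMod 2) where
  Adj x y := hammingDist x y = 1
  symm := ⟨fun x y h => by simpa [hammingDist_comm] using h⟩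
  loopless := ⟨fun x h => by simp [hammingDist_self] at h⟩

section LocalID

variable {V : Type*} {G : SimpleGraph V}

lemma cnbr_inter_cnbr_subset (hG : G.CliqueFree 3) {u v : V} (huv : G.Adj u v) :
    cnbr G u ∩ cnbr G v ⊆ {u, v} := by
  rintro w ⟨rfl | huw, rfl | hvw⟩
  · exact Or.inl rfl
  · exact Or.inl rfl
  · exact Or.inr rfl
  · classical exact (hG {u, v, w} (is3Clique_triple_iff.mpr ⟨huv, huw, hvw⟩)).elim

theorem isLocalID_of_cliqueFree_three (hG : G.CliqueFree 3) {C : Set V}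
    (hdom : IsDominating G C)
    (hC : ∀ c ∈ C, ∃ d ∈ C, ∃ e ∈ C, d ≠ e ∧ G.Adj c d ∧ G.Adj c e) : IsLocalID G C := by
  refine ⟨hdom, fun u v huv h => ?_⟩
  have hsub : iset G C u ⊆ {u, v} := fun w hw =>
    cnbr_inter_cnbr_subset hG huv ⟨hw.1, (h ▸ hw : w ∈ iset G C v).1⟩
  obtain ⟨w, hw⟩ := hdom u
  have hIw : iset G C w = iset G C u := by
    rcases hsub hw with rfl | rfl
    exacts [rfl, h.symm]
  obtain ⟨d, hd, e, he, hde, hwd, hwe⟩ := hC w hw.2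
  have hd' : d ∈ ({u, v} : Set V) := hsub (hIw ▸ ⟨Or.inr hwd, hd⟩)
  have he' : e ∈ ({u, v} : Set V) := hsub (hIw ▸ ⟨Or.inr hwe, he⟩)
  have hw' := hsub hw
  simp only [Set.mem_insert_iff, Set.mem_singleton_iff] at hd' he' hw'
  have := hwd.ne
  have := hwe.ne
  grind

end LocalID

lemma ZMod.two_sum_eq_hammingNorm {ι : Type*} [Fintype ι] (v : ι → ZMod 2) :
    ∑ i, v i = hammingNorm v := by
  rw [hammingNorm, Finset.natCast_card_filter]
  refine Finset.sum_congr rfl fun i _ => ?_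
  generalize v i = a
  revert a
  decide

lemma cube_cliqueFree_three (n : ℕ) : (cube n).CliqueFree 3 := by
  let parity : (cube n).Coloring (ZMod 2) := Coloring.mk (fun x => ∑ i, x i) fun {x y} hxy h => by
    have : ((hammingDist x y : ℕ) : ZMod 2) = 0 := by
      rw [hammingDist_eq_hammingNorm, ← ZMod.two_sum_eq_hammingNorm]
      simp only [Pi.add_apply, Pi.neg_apply, Finset.sum_add_distrib, Finset.sum_neg_distrib, h,
        neg_add_cancel]
    rw [show hammingDist x y = 1 from hxy] at this
    exact one_ne_zero this
  exact parity.colorable.cliqueFree (by simp)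

lemma hammingDist_cons_cons {n : ℕ} {β : Type*} [DecidableEq β] (a : β) (x y : Fin n → β) :
    hammingDist (Fin.cons a x : Fin (n + 1) → β) (Fin.cons a y) = hammingDist x y := by
  simp only [hammingDist, Finset.card_filter, Fin.sum_univ_succ, Fin.cons_zero, Fin.cons_succ,
    ne_eq, not_true_eq_false, if_false, zero_add]

lemma cube_adj_update {n : ℕ} (x : Fin n → ZMod 2) {i : Fin n} {z : ZMod 2} (hz : x i ≠ z) :
    (cube n).Adj x (Function.update x i z) := by
  refine Finset.card_eq_one.mpr ⟨i, ?_⟩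
  ext j
  by_cases hj : j = i <;> simp [hj, hz]

lemma cons_mem_cnbr_cube {n : ℕ} {u : Fin (n + 1) → ZMod 2} {y : Fin n → ZMod 2}
    (hy : y ∈ cnbr (cube n) (Fin.tail u)) : Fin.cons (u 0) y ∈ cnbr (cube (n + 1)) u := by
  rcases hy with rfl | hy
  · exact Or.inl (Fin.cons_self_tail u)
  · refine Or.inr ?_
    calc hammingDist u (Fin.cons (u 0) y)
        = hammingDist (Fin.cons (u 0) (Fin.tail u) : Fin (n + 1) → ZMod 2) (Fin.cons (u 0) y) := by
          rw [Fin.cons_self_tail]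
      _ = 1 := (hammingDist_cons_cons _ _ _).trans hy

lemma IsDominating.preimage_tail {n : ℕ} {S : Set (Fin n → ZMod 2)}
    (hS : IsDominating (cube n) S) : IsDominating (cube (n + 1)) (Fin.tail ⁻¹' S) := by
  intro u
  obtain ⟨y, hy, hyS⟩ := hS (Fin.tail u)
  exact ⟨Fin.cons (u 0) y, cons_mem_cnbr_cube hy, by simpa using hyS⟩

lemma exists_two_adj_mem_preimage_tail_tail {n : ℕ} (S : Set (Fin n → ZMod 2)) :
    ∀ c ∈ ((fun x => Fin.tail (Fin.tail x)) ⁻¹' S : Set (Fin (n + 2) → ZMod 2)),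
      ∃ d ∈ ((fun x => Fin.tail (Fin.tail x)) ⁻¹' S : Set (Fin (n + 2) → ZMod 2)),
      ∃ e ∈ ((fun x => Fin.tail (Fin.tail x)) ⁻¹' S : Set (Fin (n + 2) → ZMod 2)),
        d ≠ e ∧ (cube (n + 2)).Adj c d ∧ (cube (n + 2)).Adj c e := by
  intro c hc
  have hflip : ∀ a : ZMod 2, a ≠ a + 1 := by decide
  refine ⟨Function.update c 0 (c 0 + 1), ?_, Function.update c 1 (c 1 + 1), ?_, fun h => ?_,
    cube_adj_update c (hflip _), cube_adj_update c (hflip _)⟩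
  · simpa [Set.mem_preimage, Fin.tail_update_zero] using hc
  · show Fin.tail (Fin.tail (Function.update c (Fin.succ 0) _)) ∈ S
    rwa [Fin.tail_update_succ, Fin.tail_update_zero]
  · exact hflip (c 0) (by simpa using (congrFun h 0).symm)

theorem isLocalID_preimage_tail_tail {n : ℕ} {S : Set (Fin n → ZMod 2)}
    (hS : IsDominating (cube n) S) :
    IsLocalID (cube (n + 2)) ((fun x => Fin.tail (Fin.tail x)) ⁻¹' S) :=
  isLocalID_of_cliqueFree_three (cube_cliqueFree_three _) hS.preimage_tail.preimage_tail
    (exists_two_adj_mem_preimage_tail_tail S)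

lemma ncard_preimage_tail {n : ℕ} {β : Type*} (S : Set (Fin n → β)) :
    (Fin.tail ⁻¹' S : Set (Fin (n + 1) → β)).ncard = Nat.card β * S.ncard := by
  rw [← Set.ncard_univ, ← Set.ncard_prod,
    ← Set.ncard_image_of_injective _ (Fin.consEquiv fun _ => β).symm.injective,
    Equiv.image_eq_preimage_symm, Equiv.symm_symm]
  congr 1
  ext ⟨a, x⟩
  simp [Fin.consEquiv]

lemma ncard_preimage_tail_tail {n : ℕ} {β : Type*} (S : Set (Fin n → β)) :
    ((fun x => Fin.tail (Fin.tail x)) ⁻¹' S : Set (Fin (n + 2) → β)).ncard =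
      Nat.card β * (Nat.card β * S.ncard) :=
  (ncard_preimage_tail _).trans (congrArg _ (ncard_preimage_tail S))

/-- If `C'` is a dominating set of `F_2^n` then `F_2^2 ⊕ C'` is a local identifying code
in `F_2^{n+2}`; consequently the minimum size of a local identifying code in `F_2^{n+2}`
is at most `4` times the minimum size of a dominating set in `F_2^n`. -/
theorem stmt12 (n : ℕ) :
    (∀ C' : Set (Fin n → ZMod 2), IsDominating (cube n) C' →
      IsLocalID (cube (n + 2)) ((fun x => Fin.tail (Fin.tail x)) ⁻¹' C')) ∧
    sInf {k : ℕ | ∃ C : Set (Fin (n + 2) → ZMod 2), IsLocalID (cube (n + 2)) C ∧ C.ncard = k} ≤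
      4 * sInf {k : ℕ | ∃ C' : Set (Fin n → ZMod 2), IsDominating (cube n) C' ∧ C'.ncard = k} := by
  refine ⟨fun C' => isLocalID_preimage_tail_tail, ?_⟩
  obtain ⟨C', hdom, hcard⟩ := Nat.sInf_mem (s := {k : ℕ | ∃ C' : Set (Fin n → ZMod 2),
      IsDominating (cube n) C' ∧ C'.ncard = k})
    ⟨_, Set.univ, fun u => ⟨u, Set.mem_insert u _, trivial⟩, rfl⟩
  refine Nat.sInf_le ⟨_, isLocalID_preimage_tail_tail hdom, ?_⟩
  rw [ncard_preimage_tail_tail, Nat.card_zmod, hcard]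
  ring
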